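/- There exist 3ⁿ dyadic grids 𝒟_α on ℝⁿ such that for every cube Q ⊂ ℝⁿ there are α and a cube Q_α ∈ 𝒟_α with Q ⊂ Q_α and |Q_α| ≤ 6ⁿ|Q|. -/

import Mathlib

open MeasureTheory ENNReal Set
open scoped NNReal
noncomputable section

abbrev Rn (n : ℕ) := Fin n → ℝ
variable {n : ℕ}

def cubeOf (a : Rn n) (h : ℝ) : Set (Rn n) := Set.univ.pi fun i => Set.Ico (a i) (a i + h)

def IsCube (Q : Set (Rn n)) : Prop := ∃ (a : Rn n) (h : ℝ), 0 < h ∧ Q = cubeOf a h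

def avgE (Q : Set (Rn n)) (f : Rn n → ℝ≥0∞) : ℝ≥0∞ :=
  (volume Q)⁻¹ * ∫⁻ x in Q, f x ∂volume

def maximal (f : Rn n → ℝ≥0∞) (x : Rn n) : ℝ≥0∞ :=
  ⨆ (Q : Set (Rn n)) (_ : IsCube Q ∧ x ∈ Q), avgE Q f

def IsDyadicGrid (D : Set (Set (Rn n))) : Prop :=
  (∀ Q ∈ D, ∃ (a : Rn n) (k : ℤ), Q = cubeOf a ((2:ℝ)^k)) ∧
  (∀ Q ∈ D, ∀ R ∈ D, Q ∩ R = Q ∨ Q ∩ R = R ∨ Q ∩ R = ∅) ∧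
  (∀ (k : ℤ) (x : Rn n), ∃! Q, Q ∈ D ∧ (∃ a : Rn n, Q = cubeOf a ((2:ℝ)^k)) ∧ x ∈ Q)

def dyadicMaximal (D : Set (Set (Rn n))) (f : Rn n → ℝ≥0∞) (x : Rn n) : ℝ≥0∞ :=
  ⨆ (Q : Set (Rn n)) (_ : Q ∈ D ∧ x ∈ Q), avgE Q f

def vmodular (p : Rn n → ℝ) (f : Rn n → ℝ≥0∞) : ℝ≥0∞ := ∫⁻ x, f x ^ p x ∂volume

def vnorm (p : Rn n → ℝ) (f : Rn n → ℝ≥0∞) : ℝ≥0∞ :=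
  sInf {lam : ℝ≥0∞ | 0 < lam ∧ vmodular p (fun x => f x / lam) ≤ 1}

def wnorm (p : Rn n → ℝ) (w f : Rn n → ℝ≥0∞) : ℝ≥0∞ := vnorm p (fun x => f x * w x)



/-!
For `c ∈ {0, 1, 2}` take the grid whose cells of side `2^k` are `c (-2)^k / 3 + 2^k [m, m + 1)`.
Since `(-2)^p ≡ 1 (mod 3)`, every origin at a coarser scale is an origin at a finer one, so the cells
are nested or disjoint. At a fixed scale the endpoints of the three grids together make up
`(2^k / 3) ℤ`, one residue class mod 3 each; an interval of length `h < 2^k / 3` contains at most one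
point of `(2^k / 3) ℤ`, so it lies inside a single cell of one of the three grids. Doing this in each
coordinate, with `3h < 2^k ≤ 6h`, puts a cube of side `h` inside a cell of one of the `3^n` product
grids.
-/

section Interval

variable {P o x : ℝ}

theorem floor_sub_div_eq_iff (hP : 0 < P) (m : ℤ) :
    ⌊(x - o) / P⌋ = m ↔ x ∈ Ico (o + P * m) (o + P * m + P) := by
  rw [Int.floor_eq_iff, le_div_iff₀ hP, div_lt_iff₀ hP, mem_Ico]
  constructor <;> rintro ⟨h₁, h₂⟩ <;> constructor <;> linarith

theorem floor_sub_div_eq_of_forall_notMem_Ioo (hP : 0 < P) {a b : ℝ}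
    (hno : ∀ m : ℤ, o + P * m ∉ Ioo a b) (hx : x ∈ Ico a b) :
    ⌊(x - o) / P⌋ = ⌊(a - o) / P⌋ := by
  set m := ⌊(a - o) / P⌋
  have ha := (floor_sub_div_eq_iff hP m).1 rfl
  have hx_lt : x < o + P * m + P := by
    by_contra! hle
    exact hno (m + 1) ⟨by push_cast; linarith [ha.2], by push_cast; linarith [hx.2]⟩
  exact (floor_sub_div_eq_iff hP m).2 ⟨ha.1.trans hx.1, hx_lt⟩

theorem floor_sub_add_div_mul_natCast (hP : 0 < P) (M : ℤ) (N : ℕ) :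
    ⌊(x - (o + P * M)) / (P * N)⌋ = (⌊(x - o) / P⌋ - M) / N := by
  rw [← Int.floor_sub_intCast, ← Int.floor_div_natCast, ← div_div]
  congr 2
  field_simp
  ring

theorem eq_ceil_of_mul_mem_Ioo {t a : ℝ} (ht : 0 < t) {q : ℤ} (hq : t * q ∈ Ioo a (a + t)) :
    q = ⌈a / t⌉ := by
  rw [eq_comm, Int.ceil_eq_iff, lt_div_iff₀ ht, div_le_iff₀ ht]
  constructor <;> linarith [hq.1, hq.2]

theorem exists_two_zpow_mem_Ioc {x : ℝ} (hx : 0 < x) : ∃ k : ℤ, (2 : ℝ) ^ k ∈ Ioc x (2 * x) := by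
  obtain ⟨k, hk₁, hk₂⟩ := exists_mem_Ico_zpow hx one_lt_two
  refine ⟨k + 1, hk₂, ?_⟩
  rw [zpow_add_one₀ two_ne_zero]
  linarith

end Interval

section GridOrigin

theorem exists_neg_two_zpow_eq (k : ℤ) :
    ∃ ε : ℤ, (ε = 1 ∨ ε = -1) ∧ (-2 : ℝ) ^ k = ε * 2 ^ k := by
  rcases Int.even_or_odd k with hk | hk
  · exact ⟨1, .inl rfl, by simp [hk.neg_zpow]⟩
  · exact ⟨-1, .inr rfl, by simp [hk.neg_zpow]⟩

def gridOrigin (c : Fin 3) (k : ℤ) : ℝ := c * (-2 : ℝ) ^ k / 3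

theorem exists_gridOrigin_eq_add (c : Fin 3) {k l : ℤ} (hkl : k ≤ l) :
    ∃ M : ℤ, gridOrigin c l = gridOrigin c k + 2 ^ k * M := by
  obtain ⟨p, rfl⟩ := Int.le.dest hkl
  obtain ⟨ε, -, hε⟩ := exists_neg_two_zpow_eq k
  obtain ⟨d, hd⟩ : (3 : ℤ) ∣ (-2) ^ p - 1 := by
    simpa using ((show (-2 : ℤ) ≡ 1 [ZMOD 3] by decide).pow p).symm.dvd
  have hdR : ((-2 : ℝ) ^ p - 1) = 3 * d := by exact_mod_cast hd
  refine ⟨ε * c * d, ?_⟩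
  rw [gridOrigin, gridOrigin, zpow_add₀ (by norm_num), zpow_natCast, hε, sub_eq_iff_eq_add.1 hdR]
  push_cast
  ring

theorem exists_gridOrigin_forall_notMem_Ioo {a h : ℝ} (k : ℤ) (hk : 3 * h < 2 ^ k) :
    ∃ c : Fin 3, ∀ m : ℤ, gridOrigin c k + 2 ^ k * m ∉ Ioo a (a + h) := by
  obtain ⟨ε, hε, hεk⟩ := exists_neg_two_zpow_eq k
  set t : ℝ := 2 ^ k / 3
  have ht : h < t := by simp only [t]; linarith
  set q := ⌈a / t⌉
  -- `t * q` is the only multiple of `t` that can lie in the interval; pick `c ≢ ε q (mod 3)`.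
  have hc : (ε * (q + 1) % 3).toNat < 3 := by omega
  refine ⟨⟨_, hc⟩, fun m hm => ?_⟩
  have hpt : gridOrigin ⟨_, hc⟩ k + 2 ^ k * m =
      t * (ε * (ε * (q + 1) % 3).toNat + 3 * m : ℤ) := by
    simp only [gridOrigin, hεk, t]
    push_cast
    ring
  have hq : ε * (ε * (q + 1) % 3).toNat + 3 * m = q :=
    eq_ceil_of_mul_mem_Ioo (by positivity) (hpt ▸ ⟨hm.1, by linarith [hm.2, ht]⟩)
  rcases hε with rfl | rfl <;> omega

end GridOrigin

section ShiftedGrid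

variable {n : ℕ}

theorem volume_cubeOf (a : Rn n) (h : ℝ) : volume (cubeOf a h) = ENNReal.ofReal h ^ n := by
  simp [cubeOf, volume_pi_pi, Real.volume_Ico]

theorem eq_of_cubeOf_eq [NeZero n] {a b : Rn n} {h h' : ℝ} (hh : 0 ≤ h) (hh' : 0 ≤ h')
    (he : cubeOf a h = cubeOf b h') : h = h' := by
  have hvol := congrArg volume he
  rw [volume_cubeOf, volume_cubeOf] at hvol
  exact (ENNReal.ofReal_eq_ofReal_iff hh hh').1
    ((ENNReal.pow_right_strictMono (NeZero.ne n)).injective hvol)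

def gridCorner (α : Fin n → Fin 3) (k : ℤ) (j : Fin n → ℤ) : Rn n :=
  fun i => gridOrigin (α i) k + 2 ^ k * j i

def shiftedDyadicGrid (α : Fin n → Fin 3) : Set (Set (Rn n)) :=
  {Q | ∃ (k : ℤ) (j : Fin n → ℤ), Q = cubeOf (gridCorner α k j) (2 ^ k)}

def gridIndex (α : Fin n → Fin 3) (k : ℤ) (x : Rn n) : Fin n → ℤ :=
  fun i => ⌊(x i - gridOrigin (α i) k) / 2 ^ k⌋

variable {α : Fin n → Fin 3} {k l : ℤ} {x y : Rn n}

theorem gridIndex_eq_iff {j : Fin n → ℤ} :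
    gridIndex α k x = j ↔ x ∈ cubeOf (gridCorner α k j) (2 ^ k) := by
  simp only [funext_iff, gridIndex, cubeOf, mem_univ_pi, gridCorner]
  exact forall_congr' fun i => floor_sub_div_eq_iff (by positivity) _

theorem gridIndex_eq_of_le (hkl : k ≤ l) (hxy : gridIndex α k x = gridIndex α k y) :
    gridIndex α l x = gridIndex α l y := by
  obtain ⟨p, rfl⟩ := Int.le.dest hkl
  funext i
  obtain ⟨M, hM⟩ := exists_gridOrigin_eq_add (α i) hkl
  have h2 : (2 : ℝ) ^ (k + p) = 2 ^ k * (2 ^ p : ℕ) := by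
    rw [zpow_add₀ two_ne_zero]; norm_cast
  simp only [gridIndex, hM, h2, floor_sub_add_div_mul_natCast (zpow_pos two_pos k)]
  exact congrArg (fun m => (m - M) / ((2 ^ p : ℕ) : ℤ)) (congrFun hxy i)

theorem cubeOf_gridCorner_inter_eq_left_or_empty (hkl : k ≤ l) (j j' : Fin n → ℤ) :
    cubeOf (gridCorner α k j) (2 ^ k) ∩ cubeOf (gridCorner α l j') (2 ^ l) =
        cubeOf (gridCorner α k j) (2 ^ k) ∨
      cubeOf (gridCorner α k j) (2 ^ k) ∩ cubeOf (gridCorner α l j') (2 ^ l) = ∅ := by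
  refine (eq_empty_or_nonempty _).symm.imp
    (fun ⟨x, hxQ, hxR⟩ => inter_eq_left.2 fun y hy => ?_) id
  rw [← gridIndex_eq_iff] at hxQ hxR hy ⊢
  rw [← hxR, gridIndex_eq_of_le hkl (hy.trans hxQ.symm)]

theorem isDyadicGrid_shiftedDyadicGrid (α : Fin n → Fin 3) :
    IsDyadicGrid (shiftedDyadicGrid α) := by
  refine ⟨?_, ?_, fun k x => ?_⟩
  · rintro Q ⟨k, j, rfl⟩
    exact ⟨_, k, rfl⟩
  · rintro Q ⟨k, j, rfl⟩ R ⟨l, j', rfl⟩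
    rcases le_total k l with hkl | hlk
    · exact (cubeOf_gridCorner_inter_eq_left_or_empty hkl j j').imp_right .inr
    · rw [inter_comm]
      exact .inr <| (cubeOf_gridCorner_inter_eq_left_or_empty hlk j' j).imp_right id
  refine ⟨_, ⟨⟨k, gridIndex α k x, rfl⟩, ⟨_, rfl⟩, gridIndex_eq_iff.1 rfl⟩, ?_⟩
  rintro Q ⟨⟨k', j', rfl⟩, ⟨a, ha⟩, hx⟩
  rcases eq_zero_or_neZero n with rfl | _
  · exact Subsingleton.eq_univ_of_nonempty ⟨x, hx⟩ |>.trans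
      (Subsingleton.eq_univ_of_nonempty ⟨x, gridIndex_eq_iff.1 rfl⟩).symm
  obtain rfl : k' = k := zpow_right_injective₀ two_pos (by norm_num) <|
    eq_of_cubeOf_eq (by positivity) (by positivity) ha
  rw [← gridIndex_eq_iff.2 hx]

theorem exists_cubeOf_subset_cubeOf_gridCorner (b : Rn n) {h : ℝ} (hk : 3 * h < 2 ^ k) :
    ∃ (α : Fin n → Fin 3) (j : Fin n → ℤ), cubeOf b h ⊆ cubeOf (gridCorner α k j) (2 ^ k) := by
  choose α hα using fun i => exists_gridOrigin_forall_notMem_Ioo (a := b i) k hk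
  refine ⟨α, gridIndex α k b, fun x hx => gridIndex_eq_iff.1 ?_⟩
  funext i
  exact floor_sub_div_eq_of_forall_notMem_Ioo (zpow_pos two_pos k) (hα i) (mem_univ_pi.1 hx i)

end ShiftedGrid

theorem three_pow_n_dyadic_grids (n : ℕ) :
    ∃ D : Fin (3^n) → Set (Set (Rn n)),
      (∀ a, IsDyadicGrid (D a)) ∧
      ∀ Q : Set (Rn n), IsCube Q → ∃ (a : Fin (3^n)) (Qa : Set (Rn n)),
        Qa ∈ D a ∧ Q ⊆ Qa ∧ volume Qa ≤ 6^n * volume Q := by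
  refine ⟨fun a => shiftedDyadicGrid (finFunctionFinEquiv.symm a),
    fun a => isDyadicGrid_shiftedDyadicGrid _, ?_⟩
  rintro Q ⟨b, h, hh, rfl⟩
  obtain ⟨k, hk₃, hk₆⟩ := exists_two_zpow_mem_Ioc (by positivity : 0 < 3 * h)
  obtain ⟨α, j, hsub⟩ := exists_cubeOf_subset_cubeOf_gridCorner b hk₃
  refine ⟨finFunctionFinEquiv α, _, ⟨k, j, by rw [Equiv.symm_apply_apply]⟩, hsub, ?_⟩
  calc volume (cubeOf (gridCorner α k j) (2 ^ k)) = ENNReal.ofReal (2 ^ k) ^ n := volume_cubeOf _ _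
    _ ≤ ENNReal.ofReal (6 * h) ^ n := by gcongr; linarith
    _ = 6 ^ n * volume (cubeOf b h) := by
      rw [volume_cubeOf, ENNReal.ofReal_mul (by norm_num), mul_pow, ENNReal.ofReal_ofNat]
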